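/- arXiv:1907.13023 — 3 statements merged into one kernel-verified Lean document; each statement's English description precedes it below -/
import Mathlib

section
/- Let x ∈ E, H > 0 and ν ∈ (0,1]. Set D_{x,H} = max{1, (6‖∇f(x)‖/H)^{1/2}, 3‖∇²f(x)‖/H, (3 + ‖D³f(x)‖/H)^{1/ν}} and let L_H(x) = {z ∈ E : Ω_{x,3,H}^{(ν)}(z) ≤ f(x)}. Then every y in the convex hull of L_H(x) satisfies ‖y − x‖ ≤ D_{x,H}, and consequently ‖∇²ρ_x(y)‖ ≤ ‖∇²f(x)‖ + (2+ν)·D_{x,H}² for all such y, where ‖·‖ applied to operators denotes the operator norm. -/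
/-!
For `z` in the sublevel set and `r = ‖z - x‖`, the regularization `H/6 · r^(3+ν)` is
dominated by the Taylor terms, which are at most `‖∇f‖ r + ‖∇²f‖ r²/2 + ‖D³f‖ r³/6`. Each
threshold in `D_{x,H}` is chosen so that beyond it the corresponding Taylor term loses against a
share of the regularization; hence the sublevel set, and with it its convex hull, lies in the
closed ball of radius `D_{x,H}`.

For the Hessian, `∇²ρ_x(y) = ½(B + Bᵀ) + ‖u‖^(1+ν) I + (1+ν) ‖u‖^(ν-1) u uᵀ` with `u = y - x`
and `B = ∇²f(x)`, whose norm is at most `‖B‖ + (2+ν) ‖u‖^(1+ν) ≤ ‖B‖ + (2+ν) D²`, as `D ≥ 1` and `1 + ν ≤ 2`.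
-/

open scoped InnerProductSpace

section RadiusBound

variable {a b c H ν r : ℝ}

lemma mul_lt_of_rpow_half_lt (hH : 0 < H) (ha : 0 ≤ a)
    (hr : (6 * a / H) ^ ((1 : ℝ) / 2) < r) : a * r < H / 6 * r ^ 3 := by
  have h0 : 0 < r := (Real.rpow_nonneg (by positivity) _).trans_lt hr
  have hsq : 6 * a / H < r ^ 2 := by
    calc 6 * a / H = ((6 * a / H) ^ ((1 : ℝ) / 2)) ^ 2 := by
          rw [← Real.rpow_natCast, ← Real.rpow_mul (by positivity)]; norm_num
      _ < r ^ 2 := by gcongr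
  rw [div_lt_iff₀ hH] at hsq
  nlinarith

lemma half_mul_sq_lt_of_lt (hH : 0 < H) (hb : 0 ≤ b) (hr : 3 * b / H < r) :
    b / 2 * r ^ 2 < H / 6 * r ^ 3 := by
  have h0 : 0 < r := (by positivity : 0 ≤ 3 * b / H).trans_lt hr
  rw [div_lt_iff₀ hH] at hr
  nlinarith [pow_pos h0 2]

lemma add_lt_of_rpow_inv_lt (hH : 0 < H) (hν : 0 < ν) (hc : 0 ≤ c)
    (hr : (3 + c / H) ^ (1 / ν) < r) :
    H / 2 * r ^ 3 + c / 6 * r ^ 3 < H / 6 * r ^ ((3 : ℝ) + ν) := by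
  have h0 : 0 < r := (Real.rpow_nonneg (by positivity) _).trans_lt hr
  have hpow : 3 + c / H < r ^ ν := by
    calc 3 + c / H = ((3 + c / H) ^ (1 / ν)) ^ ν := by
          rw [← Real.rpow_mul (by positivity), one_div_mul_cancel hν.ne', Real.rpow_one]
      _ < r ^ ν := by gcongr
  calc H / 2 * r ^ 3 + c / 6 * r ^ 3 = H / 6 * r ^ 3 * (3 + c / H) := by field_simp; ring
    _ < H / 6 * r ^ 3 * r ^ ν := by gcongr
    _ = H / 6 * r ^ ((3 : ℝ) + ν) := by rw [Real.rpow_add h0, Real.rpow_ofNat, mul_assoc]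

theorem le_max_of_rpow_le_cubic (hH : 0 < H) (hν : 0 < ν) (ha : 0 ≤ a) (hb : 0 ≤ b)
    (hc : 0 ≤ c) (h : H / 6 * r ^ ((3 : ℝ) + ν) ≤ a * r + b / 2 * r ^ 2 + c / 6 * r ^ 3) :
    r ≤ max (max 1 ((6 * a / H) ^ ((1 : ℝ) / 2))) (max (3 * b / H) ((3 + c / H) ^ (1 / ν))) := by
  by_contra! hr
  simp only [max_lt_iff] at hr
  obtain ⟨⟨hr1, hra⟩, hrb, hrc⟩ := hr
  have := mul_lt_of_rpow_half_lt hH ha hra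
  have := half_mul_sq_lt_of_lt hH hb hrb
  have := add_lt_of_rpow_inv_lt hH hν hc hrc
  nlinarith [pow_pos (zero_lt_one.trans hr1) 3]

end RadiusBound

lemma ContinuousMultilinearMap.neg_opNorm_mul_pow_le {E : Type*} [NormedAddCommGroup E]
    [NormedSpace ℝ E] {n : ℕ} (T : E [×n]→L[ℝ] ℝ) {m : Fin n → E} {u : E} (hm : ∀ i, m i = u) :
    -(‖T‖ * ‖u‖ ^ n) ≤ T m :=
  neg_le_of_abs_le <| T.le_opNorm_mul_pow_of_le <|
    (pi_norm_le_iff_of_nonneg (norm_nonneg u)).2 fun i => (congrArg norm (hm i)).le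

theorem norm_le_of_cubic_model_add_rpow_nonpos {E : Type*} [NormedAddCommGroup E]
    [InnerProductSpace ℝ E] {H ν : ℝ} (hH : 0 < H) (hν : 0 < ν) (g : E) (B : E [×2]→L[ℝ] ℝ)
    (T : E [×3]→L[ℝ] ℝ) (u : E)
    (h : ⟪g, u⟫_ℝ + 1 / 2 * B ![u, u] + 1 / 6 * T ![u, u, u] + H / 6 * ‖u‖ ^ ((3 : ℝ) + ν) ≤ 0) :
    ‖u‖ ≤ max (max 1 ((6 * ‖g‖ / H) ^ ((1 : ℝ) / 2)))
      (max (3 * ‖B‖ / H) ((3 + ‖T‖ / H) ^ (1 / ν))) := by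
  have hg := neg_le_of_abs_le (abs_real_inner_le_norm g u)
  have hB := B.neg_opNorm_mul_pow_le (m := ![u, u]) (u := u) (by simp [Fin.forall_fin_two])
  have hT := T.neg_opNorm_mul_pow_le (m := ![u, u, u]) (u := u) (by simp [Fin.forall_fin_succ])
  exact le_max_of_rpow_le_cubic hH hν (norm_nonneg g) (norm_nonneg B) (norm_nonneg T)
    (by linarith)

section CurryFinTwo

variable {𝕜 E G : Type*} [NontriviallyNormedField 𝕜] [NormedAddCommGroup E] [NormedSpace 𝕜 E]
  [NormedAddCommGroup G] [NormedSpace 𝕜 G]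

noncomputable def ContinuousMultilinearMap.curryFinTwo (B : E [×2]→L[𝕜] G) : E →L[𝕜] E →L[𝕜] G :=
  (continuousMultilinearCurryFin1 𝕜 E G).toLinearIsometry.toContinuousLinearMap.comp B.curryLeft

@[simp]
lemma ContinuousMultilinearMap.curryFinTwo_apply (B : E [×2]→L[𝕜] G) (v w : E) :
    B.curryFinTwo v w = B ![v, w] := by
  simp [curryFinTwo]

@[simp]
lemma ContinuousMultilinearMap.norm_curryFinTwo (B : E [×2]→L[𝕜] G) :
    ‖B.curryFinTwo‖ = ‖B‖ := by
  rw [curryFinTwo, LinearIsometry.norm_toContinuousLinearMap_comp, curryLeft_norm]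

end CurryFinTwo

lemma ContinuousLinearMap.hasFDerivAt_apply_self {𝕜 E G : Type*} [NontriviallyNormedField 𝕜]
    [NormedAddCommGroup E] [NormedSpace 𝕜 E] [NormedAddCommGroup G] [NormedSpace 𝕜 G]
    (b : E →L[𝕜] E →L[𝕜] G) (u : E) :
    HasFDerivAt (fun w => b w w) (b u + b.flip u) u := by
  simpa using b.hasFDerivAt.clm_apply (hasFDerivAt_id u)

section NormRpow

variable {E : Type*} [NormedAddCommGroup E] [InnerProductSpace ℝ E] {p : ℝ}

-- `innerSL ℝ` is conjugate-linear in its type; this copy is linear, so that it can be added to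
-- other real bilinear maps.
noncomputable def realInnerSL : E →L[ℝ] E →L[ℝ] ℝ := innerSL ℝ

lemma norm_realInnerSL_le : ‖(realInnerSL : E →L[ℝ] E →L[ℝ] ℝ)‖ ≤ 1 := norm_innerSL_le ℝ

lemma hasFDerivAt_one_div_mul_norm_rpow (hp : 1 < p) (u : E) :
    HasFDerivAt (fun w : E => 1 / p * ‖w‖ ^ p) (‖u‖ ^ (p - 2) • innerSL ℝ u) u := by
  refine ((hasFDerivAt_norm_rpow u hp).const_mul (1 / p)).congr_fderiv ?_
  rw [smul_smul]
  field_simp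

lemma hasFDerivAt_norm_rpow_smul_innerSL (hp : 1 < p) (u : E) :
    HasFDerivAt (fun w : E => ‖w‖ ^ p • innerSL ℝ w)
      (‖u‖ ^ p • realInnerSL + ((p * ‖u‖ ^ (p - 2)) • innerSL ℝ u).smulRight (innerSL ℝ u)) u :=
  (hasFDerivAt_norm_rpow u hp).smul realInnerSL.hasFDerivAt

lemma norm_rpow_smul_realInnerSL_add_smulRight_le (hp : 0 ≤ p) (u : E) :
    ‖‖u‖ ^ p • realInnerSL + ((p * ‖u‖ ^ (p - 2)) • innerSL ℝ u).smulRight (innerSL ℝ u)‖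
      ≤ (1 + p) * ‖u‖ ^ p := by
  have hsq : ‖u‖ ^ (p - 2) * (‖u‖ * ‖u‖) ≤ ‖u‖ ^ p := by
    rcases (norm_nonneg u).eq_or_lt with h0 | h0
    · simp [← h0, Real.rpow_nonneg]
    · rw [← sq, ← Real.rpow_natCast, ← Real.rpow_add h0]; norm_num
  have hfirst : ‖‖u‖ ^ p • (realInnerSL : E →L[ℝ] E →L[ℝ] ℝ)‖ ≤ ‖u‖ ^ p := by
    refine (ContinuousLinearMap.opNorm_smul_le _ _).trans ?_
    rw [Real.norm_of_nonneg (by positivity)]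
    exact mul_le_of_le_one_right (by positivity) norm_realInnerSL_le
  have hsecond : ‖((p * ‖u‖ ^ (p - 2)) • innerSL ℝ u).smulRight (innerSL ℝ u)‖ ≤ p * ‖u‖ ^ p := by
    rw [ContinuousLinearMap.norm_smulRight_apply, norm_smul, innerSL_apply_norm,
      Real.norm_of_nonneg (by positivity)]
    nlinarith [mul_le_mul_of_nonneg_left hsq hp]
  linarith [norm_add_le (E := E →L[ℝ] E →L[ℝ] ℝ) (‖u‖ ^ p • realInnerSL)
    (((p * ‖u‖ ^ (p - 2)) • innerSL ℝ u).smulRight (innerSL ℝ u))]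

end NormRpow

section RegularizedQuadratic

variable {E : Type*} [NormedAddCommGroup E] [InnerProductSpace ℝ E] {p : ℝ}
  (b : E →L[ℝ] E →L[ℝ] ℝ)

lemma hasFDerivAt_half_apply_self_add_norm_rpow (hp : 1 < p) (u : E) :
    HasFDerivAt (fun w => 1 / 2 * b w w + 1 / p * ‖w‖ ^ p)
      ((1 / 2 : ℝ) • (b u + b.flip u) + ‖u‖ ^ (p - 2) • innerSL ℝ u) u :=
  ((b.hasFDerivAt_apply_self u).const_mul (1 / 2)).add (hasFDerivAt_one_div_mul_norm_rpow hp u)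

lemma norm_iteratedFDeriv_two_half_apply_self_add_norm_rpow_le (hp : 3 < p) (u : E) :
    ‖iteratedFDeriv ℝ 2 (fun w => 1 / 2 * b w w + 1 / p * ‖w‖ ^ p) u‖
      ≤ ‖b‖ + (p - 1) * ‖u‖ ^ (p - 2) := by
  have hgrad : fderiv ℝ (fun w => 1 / 2 * b w w + 1 / p * ‖w‖ ^ p)
      = fun w => (1 / 2 : ℝ) • (b + b.flip) w + ‖w‖ ^ (p - 2) • innerSL ℝ w :=
    funext fun w => (hasFDerivAt_half_apply_self_add_norm_rpow b (by linarith) w).fderiv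
  have hhess : HasFDerivAt (fun w => (1 / 2 : ℝ) • (b + b.flip) w + ‖w‖ ^ (p - 2) • innerSL ℝ w)
      _ u := (((b + b.flip).hasFDerivAt (x := u)).const_smul (1 / 2 : ℝ)).add
    (hasFDerivAt_norm_rpow_smul_innerSL (p := p - 2) (by linarith) u)
  have hsym : ‖(1 / 2 : ℝ) • (b + b.flip)‖ ≤ ‖b‖ := by
    refine (ContinuousLinearMap.opNorm_smul_le _ _).trans ?_
    have := norm_add_le b b.flip
    rw [ContinuousLinearMap.opNorm_flip] at this
    rw [Real.norm_of_nonneg (by norm_num)]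
    linarith
  have hnorm := norm_rpow_smul_realInnerSL_add_smulRight_le (p := p - 2) (by linarith) u
  rw [← norm_iteratedFDeriv_fderiv (n := 1), norm_iteratedFDeriv_one, hgrad, hhess.fderiv]
  refine (norm_add_le _ _).trans ?_
  linarith

end RegularizedQuadratic

theorem statement_6_general
    {E : Type*} [NormedAddCommGroup E] [InnerProductSpace ℝ E] [FiniteDimensional ℝ E]
    (ν : ℝ) (hν : ν ∈ Set.Ioc (0 : ℝ) 1)
    (f : E → ℝ)
    (x : E) (H : ℝ) (hH : 0 < H)
    (DxH : ℝ)
    (hD : DxH = max (max 1 ((6 * ‖gradient f x‖ / H) ^ ((1 : ℝ) / 2)))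
        (max (3 * ‖iteratedFDeriv ℝ 2 f x‖ / H)
          ((3 + ‖iteratedFDeriv ℝ 3 f x‖ / H) ^ (1 / ν))))
    (Ω ρ : E → ℝ)
    (hΩ : Ω = fun y => f x + ⟪gradient f x, y - x⟫_ℝ
        + (1 / 2) * iteratedFDeriv ℝ 2 f x ![y - x, y - x]
        + (1 / 6) * iteratedFDeriv ℝ 3 f x ![y - x, y - x, y - x]
        + (H / 6) * ‖y - x‖ ^ ((3 : ℝ) + ν))
    (hρ : ρ = fun y => (1 / 2) * iteratedFDeriv ℝ 2 f x ![y - x, y - x]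
        + (1 / (3 + ν)) * ‖y - x‖ ^ ((3 : ℝ) + ν)) :
    ∀ y ∈ convexHull ℝ {z : E | Ω z ≤ f x},
      ‖y - x‖ ≤ DxH ∧
      ‖iteratedFDeriv ℝ 2 ρ y‖ ≤ ‖iteratedFDeriv ℝ 2 f x‖ + (2 + ν) * DxH ^ 2 := by
  obtain ⟨hν0, hν1⟩ := hν
  have hD1 : 1 ≤ DxH := hD ▸ le_max_of_le_left (le_max_left _ _)
  have hsub : {z | Ω z ≤ f x} ⊆ Metric.closedBall x DxH := fun z hz => by
    rw [Set.mem_ofPred_eq, hΩ] at hz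
    rw [Metric.mem_closedBall, dist_eq_norm, hD]
    exact norm_le_of_cubic_model_add_rpow_nonpos hH hν0 _ _ _ _ (by linarith)
  intro y hy
  have hyx : ‖y - x‖ ≤ DxH := by
    simpa [dist_eq_norm] using convexHull_min hsub (convex_closedBall x DxH) hy
  refine ⟨hyx, ?_⟩
  have hpow : ‖y - x‖ ^ ((3 : ℝ) + ν - 2) ≤ DxH ^ 2 := by
    calc ‖y - x‖ ^ ((3 : ℝ) + ν - 2) ≤ DxH ^ ((3 : ℝ) + ν - 2) := by gcongr; linarith
      _ ≤ DxH ^ (2 : ℝ) := Real.rpow_le_rpow_of_exponent_le hD1 (by linarith)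
      _ = DxH ^ 2 := Real.rpow_two DxH
  set b := (iteratedFDeriv ℝ 2 f x).curryFinTwo
  set ρ₀ : E → ℝ := fun w => 1 / 2 * b w w + 1 / (3 + ν) * ‖w‖ ^ ((3 : ℝ) + ν)
  have hρ_comp : ρ = fun z => ρ₀ (z - x) := by
    rw [hρ]; funext z; simp only [ρ₀, b, ContinuousMultilinearMap.curryFinTwo_apply]
  rw [hρ_comp, iteratedFDeriv_comp_sub]
  calc _ ≤ ‖b‖ + (3 + ν - 1) * ‖y - x‖ ^ ((3 : ℝ) + ν - 2) :=
        norm_iteratedFDeriv_two_half_apply_self_add_norm_rpow_le b (by linarith) _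
    _ ≤ ‖iteratedFDeriv ℝ 2 f x‖ + (2 + ν) * DxH ^ 2 := by
        rw [ContinuousMultilinearMap.norm_curryFinTwo]
        nlinarith

/-- Lemma 3.7. For `ν ∈ (0,1]` and `H > 0`, every `y` in the convex hull of
`L_H(x) = {z : Ω_{x,3,H}^{(ν)}(z) ≤ f(x)}` satisfies `‖y − x‖ ≤ D_{x,H}` and
`‖∇²ρ_x(y)‖ ≤ ‖∇²f(x)‖ + (2+ν)D_{x,H}²`. -/
theorem statement_6
    {E : Type*} [NormedAddCommGroup E] [InnerProductSpace ℝ E] [FiniteDimensional ℝ E]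
    (ν : ℝ) (hν : ν ∈ Set.Ioc (0 : ℝ) 1)
    (f : E → ℝ) (hf : ContDiff ℝ 3 f)
    (x : E) (H : ℝ) (hH : 0 < H)
    (DxH : ℝ)
    (hD : DxH = max (max 1 ((6 * ‖gradient f x‖ / H) ^ ((1 : ℝ) / 2)))
        (max (3 * ‖iteratedFDeriv ℝ 2 f x‖ / H)
          ((3 + ‖iteratedFDeriv ℝ 3 f x‖ / H) ^ (1 / ν))))
    (Ω ρ : E → ℝ)
    (hΩ : Ω = fun y => f x + ⟪gradient f x, y - x⟫_ℝ
        + (1 / 2) * iteratedFDeriv ℝ 2 f x ![y - x, y - x]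
        + (1 / 6) * iteratedFDeriv ℝ 3 f x ![y - x, y - x, y - x]
        + (H / 6) * ‖y - x‖ ^ ((3 : ℝ) + ν))
    (hρ : ρ = fun y => (1 / 2) * iteratedFDeriv ℝ 2 f x ![y - x, y - x]
        + (1 / (3 + ν)) * ‖y - x‖ ^ ((3 : ℝ) + ν)) :
    ∀ y ∈ convexHull ℝ {z : E | Ω z ≤ f x},
      ‖y - x‖ ≤ DxH ∧
      ‖iteratedFDeriv ℝ 2 ρ y‖ ≤ ‖iteratedFDeriv ℝ 2 f x‖ + (2 + ν) * DxH ^ 2 :=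
  statement_6_general ν hν f x H hH DxH hD Ω ρ hΩ hρ
end

section
/- Suppose (H1)–(H3) hold, (H4) holds with μ = 0, and g has a global minimizer y*. Let {y_k} be generated by Algorithm A and set M = max{2L₀, 4L}. If T = 3s for some integer s ≥ 1, then min_{0≤k≤T−1} ‖∇g(y_k)‖ ≤ M·N·[q·β_d(y₀, y*)/σ_q]^{1/q}·(3/T)^{2/q}. -/
/-!
Minimality of a step `w` with coefficient `c` taken from `u` gives the first-order condition
`∇g(u) = c (∇d(u) - ∇d(w))`. Together with the acceptance test it yields the descent
`g(w) + c β_d(w, u) ≤ g(u)`, and together with convexity of `g` and the three-point identity the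
rate `g(w) - g(y*) ≤ c (β_d(u, y*) - β_d(w, y*))`. Since uniform convexity makes the model
coercive, a step with any coefficient `≥ L` exists, so the accepted coefficients are at most
`M / 2`. Telescoping the rate over the first `2s` steps bounds `g(y_{2s}) - g(y*)` by
`M β_d(y₀, y*) / (4s)`; telescoping the descent over the next `s` steps then produces
`k ∈ [2s, 3s)` with `c_k β_d(y_{k+1}, y_k) ≤ M β_d(y₀, y*) / (4s²)`. Finally
`‖∇g(y_k)‖ ≤ c_k N ‖y_{k+1} - y_k‖`, because the iterates stay in the sublevel set where the
Hessian of `d` is bounded by `N`, and uniform convexity converts `‖y_{k+1} - y_k‖^q` into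
`β_d(y_{k+1}, y_k)`.
-/

open scoped InnerProductSpace

/-- The Bregman distance `β_d(u, v) = d(v) − d(u) − ⟨∇d(u), v − u⟩`. -/
noncomputable def breg {E : Type*} [NormedAddCommGroup E] [InnerProductSpace ℝ E]
    [CompleteSpace E] (d : E → ℝ) (u v : E) : ℝ :=
  d v - d u - ⟪gradient d u, v - u⟫_ℝ

/-- One successful step of the adaptive Bregman proximal gradient method with coefficient `M`:
`w` is a global minimizer of `z ↦ ⟨∇g(yk), z − yk⟩ + M·β_d(yk, z)` and satisfies the
sufficient-decrease acceptance test. -/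
noncomputable def stepOK {E : Type*} [NormedAddCommGroup E] [InnerProductSpace ℝ E]
    [CompleteSpace E] (g d : E → ℝ) (M : ℝ) (yk w : E) : Prop :=
  (∀ z : E, ⟪gradient g yk, w - yk⟫_ℝ + M * breg d yk w
      ≤ ⟪gradient g yk, z - yk⟫_ℝ + M * breg d yk z) ∧
  g w ≤ g yk + ⟪gradient g yk, w - yk⟫_ℝ + M * breg d yk w

/-- Algorithm A (adaptive Bregman proximal gradient method): `L 0 = L₀` and, for each `k`,
`i k` is the smallest integer `≥ 0` such that the regularized step with coefficient
`2^{i k}·L k` exists and is accepted, `y (k+1)` is that step, and `L (k+1) = 2^{i k − 1}·L k`. -/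
noncomputable def algA {E : Type*} [NormedAddCommGroup E] [InnerProductSpace ℝ E]
    [CompleteSpace E] (g d : E → ℝ) (L0 : ℝ) (y : ℕ → E) (L : ℕ → ℝ) (i : ℕ → ℕ) : Prop :=
  L 0 = L0 ∧ ∀ k : ℕ,
    stepOK g d ((2 : ℝ) ^ i k * L k) (y k) (y (k + 1)) ∧
    (∀ j : ℕ, j < i k → ¬ ∃ w : E, stepOK g d ((2 : ℝ) ^ j * L k) (y k) w) ∧
    L (k + 1) = (2 : ℝ) ^ i k * L k / 2

open Filter

theorem tendsto_mul_rpow_sub_mul_atTop {K q : ℝ} (hK : 0 < K) (hq : 1 < q) (a : ℝ) :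
    Tendsto (fun t : ℝ => K * t ^ q - a * t) atTop atTop := by
  have hfactor : Tendsto (fun t : ℝ => t * (K * t ^ (q - 1) - a)) atTop atTop :=
    tendsto_id.atTop_mul_atTop₀ <| tendsto_atTop_add_const_right _ (-a) <|
      (tendsto_rpow_atTop (sub_pos.2 hq)).const_mul_atTop hK
  refine hfactor.congr' ((eventually_gt_atTop 0).mono fun t ht => ?_)
  rw [mul_sub, mul_left_comm, ← Real.rpow_one_add' ht.le (by linarith), add_sub_cancel,
    mul_comm t a]

theorem mul_rpow_le_of_rpow_le {q c M b Δ B : ℝ} (hq : 1 ≤ q) (hc : 0 ≤ c) (hcM : c ≤ M)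
    (hΔ : 0 ≤ Δ) (hΔb : Δ ^ q ≤ b) (hcb : c * b ≤ B) : (c * Δ) ^ q ≤ M ^ (q - 1) * B := by
  have hsplit : c ^ q = c ^ (q - 1) * c := by
    conv_lhs => rw [← sub_add_cancel q 1]
    rw [Real.rpow_add' hc (by linarith), Real.rpow_one]
  calc (c * Δ) ^ q = c ^ (q - 1) * (c * Δ ^ q) := by
        rw [Real.mul_rpow hc hΔ, hsplit, mul_assoc]
    _ ≤ c ^ (q - 1) * (c * b) := by gcongr
    _ ≤ M ^ (q - 1) * B := by
        gcongr
        · exact (mul_nonneg hc (Real.rpow_nonneg hΔ q)).trans (by gcongr)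
        · exact Real.rpow_nonneg (hc.trans hcM) _

theorem le_mul_rpow_mul_rpow_of_rpow_le {q x A X Y : ℝ} (hq : 0 < q) (hx : 0 ≤ x) (hA : 0 ≤ A)
    (hX : 0 ≤ X) (hY : 0 ≤ Y) (h : x ^ q ≤ A ^ q * X * Y ^ 2) :
    x ≤ A * X ^ (1 / q) * Y ^ (2 / q) := by
  rw [← Real.rpow_le_rpow_iff hx (by positivity) hq, Real.mul_rpow (by positivity) (by positivity),
    Real.mul_rpow hA (by positivity), ← Real.rpow_mul hX, ← Real.rpow_mul hY,
    one_div_mul_cancel hq.ne', div_mul_cancel₀ _ hq.ne', Real.rpow_one, Real.rpow_two]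
  exact h

section Rates

variable {f r e c : ℕ → ℝ} {C : ℝ}

theorem nat_mul_le_mul_of_rate (hC : 0 ≤ C) (hf : ∀ k, 0 ≤ f k) (hr : ∀ k, 0 ≤ r k)
    (hanti : Antitone f) (hc : ∀ k, 0 < c k ∧ c k ≤ C)
    (hrate : ∀ k, f (k + 1) ≤ c k * (r k - r (k + 1))) (n : ℕ) :
    n * f n ≤ C * r 0 := by
  have hstep : ∀ k, f (k + 1) ≤ C * (r k - r (k + 1)) := fun k => by
    have hdec : 0 ≤ r k - r (k + 1) :=
      nonneg_of_mul_nonneg_right ((hf _).trans (hrate k)) (hc k).1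
    exact (hrate k).trans (mul_le_mul_of_nonneg_right (hc k).2 hdec)
  calc (n : ℝ) * f n = ∑ k ∈ Finset.range n, f n := by simp
    _ ≤ ∑ k ∈ Finset.range n, C * (r k - r (k + 1)) := Finset.sum_le_sum fun k hk =>
        (hanti (Finset.mem_range.1 hk : k < n)).trans (hstep k)
    _ = C * (r 0 - r n) := by rw [← Finset.mul_sum, Finset.sum_range_sub']
    _ ≤ C * r 0 := by nlinarith [hr n]

theorem sum_Ico_le_sub_of_descent (hdesc : ∀ k, f (k + 1) + e k ≤ f k) {m n : ℕ} (hmn : m ≤ n) :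
    ∑ k ∈ Finset.Ico m n, e k ≤ f m - f n := by
  calc ∑ k ∈ Finset.Ico m n, e k ≤ ∑ k ∈ Finset.Ico m n, (f k - f (k + 1)) :=
        Finset.sum_le_sum fun k _ => by linarith [hdesc k]
    _ = f m - f n := by
        rw [← neg_sub, ← Finset.sum_Ico_sub (fun k => f k) hmn, ← Finset.sum_neg_distrib]
        simp only [neg_sub]

theorem exists_mem_Ico_le_of_rate (hC : 0 ≤ C) (hf : ∀ k, 0 ≤ f k) (hr : ∀ k, 0 ≤ r k)
    (he : ∀ k, 0 ≤ e k) (hc : ∀ k, 0 < c k ∧ c k ≤ C) (hdesc : ∀ k, f (k + 1) + e k ≤ f k)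
    (hrate : ∀ k, f (k + 1) ≤ c k * (r k - r (k + 1))) {s : ℕ} (hs : 0 < s) :
    ∃ k ∈ Finset.Ico (2 * s) (3 * s), e k ≤ C * r 0 / (2 * s ^ 2) := by
  have hanti : Antitone f := antitone_nat_of_succ_le fun k => by linarith [hdesc k, he k]
  have hgap := nat_mul_le_mul_of_rate hC hf hr hanti hc hrate (2 * s)
  have hsum := sum_Ico_le_sub_of_descent hdesc (by omega : 2 * s ≤ 3 * s)
  refine Finset.exists_le_of_sum_le (by simp [hs]) (hsum.trans ?_)
  have hs' : (0 : ℝ) < s := by exact_mod_cast hs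
  rw [Finset.sum_const, Nat.card_Ico, show 3 * s - 2 * s = s by omega, nsmul_eq_mul,
    show (s : ℝ) * (C * r 0 / (2 * s ^ 2)) = C * r 0 / (2 * s) by field_simp,
    le_div_iff₀ (by positivity)]
  push_cast at hgap
  nlinarith [hf (3 * s)]

end Rates

section Bregman

variable {E : Type*} [NormedAddCommGroup E] [InnerProductSpace ℝ E] [CompleteSpace E]

theorem breg_add_breg (d : E → ℝ) (u v : E) :
    breg d u v + breg d v u = ⟪gradient d u - gradient d v, u - v⟫_ℝ := by
  simp only [breg, inner_sub_left, inner_sub_right, real_inner_comm u]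
  ring

theorem breg_three_point (d : E → ℝ) (a b c : E) :
    breg d a c = breg d a b + breg d b c + ⟪gradient d b - gradient d a, c - b⟫_ℝ := by
  simp only [breg, inner_sub_left, inner_sub_right]
  ring

theorem breg_nonneg_of_uniformlyConvex {d : E → ℝ} {q σq : ℝ} (hq : 0 ≤ q) (hσq : 0 ≤ σq)
    (hH2 : ∀ x y : E, σq / q * ‖x - y‖ ^ q ≤ breg d y x) (u v : E) : 0 ≤ breg d u v :=
  (mul_nonneg (div_nonneg hσq hq) (Real.rpow_nonneg (norm_nonneg _) q)).trans (hH2 v u)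

theorem norm_sub_rpow_le_mul_breg {d : E → ℝ} {q σq : ℝ} (hq : 0 < q) (hσq : 0 < σq)
    (hH2 : ∀ x y : E, σq / q * ‖x - y‖ ^ q ≤ breg d y x) (u v : E) :
    ‖u - v‖ ^ q ≤ q / σq * breg d v u := by
  calc ‖u - v‖ ^ q = q / σq * (σq / q * ‖u - v‖ ^ q) := by field_simp
    _ ≤ q / σq * breg d v u := by gcongr; exact hH2 u v

theorem hasFDerivAt_breg {d : E → ℝ} (hd : Differentiable ℝ d) (u z : E) :
    HasFDerivAt (breg d u) (fderiv ℝ d z - innerSL ℝ (gradient d u)) z := by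
  have hlin : HasFDerivAt (fun z : E => ⟪gradient d u, z - u⟫_ℝ) (innerSL ℝ (gradient d u)) z := by
    simpa only [innerSL_apply_apply, inner_sub_right] using
      (innerSL ℝ (gradient d u)).hasFDerivAt.sub_const ⟪gradient d u, u⟫_ℝ
  exact ((hd z).hasFDerivAt.sub_const (d u)).sub hlin

theorem norm_gradient_sub_le_of_norm_iteratedFDeriv_le {d : E → ℝ} (hd : ContDiff ℝ 2 d)
    {S : Set E} (hS : Convex ℝ S) {N : ℝ} (hN : ∀ z ∈ S, ‖iteratedFDeriv ℝ 2 d z‖ ≤ N)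
    {u v : E} (hu : u ∈ S) (hv : v ∈ S) :
    ‖gradient d u - gradient d v‖ ≤ N * ‖u - v‖ := by
  have hdd : ContDiff ℝ 1 (fderiv ℝ d) := hd.fderiv_right le_rfl
  have hfderiv : ‖fderiv ℝ d u - fderiv ℝ d v‖ ≤ N * ‖u - v‖ := by
    refine hS.norm_image_sub_le_of_norm_fderiv_le
      (fun x _ => (hdd.differentiable one_ne_zero).differentiableAt) (fun x hx => ?_) hv hu
    have hx2 := hN x hx
    rwa [← norm_iteratedFDeriv_fderiv, norm_iteratedFDeriv_one] at hx2
  rwa [gradient, gradient, ← map_sub, LinearIsometryEquiv.norm_map]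

end Bregman

namespace stepOK

variable {E : Type*} [NormedAddCommGroup E] [InnerProductSpace ℝ E] [CompleteSpace E]
  {g d : E → ℝ} {c : ℝ} {u w : E}

theorem gradient_eq (h : stepOK g d c u w) (hd : Differentiable ℝ d) :
    gradient g u = c • (gradient d u - gradient d w) := by
  have hmodel : HasFDerivAt (fun z => ⟪gradient g u, z - u⟫_ℝ + c * breg d u z)
      (innerSL ℝ (gradient g u) + c • (fderiv ℝ d w - innerSL ℝ (gradient d u))) w := by
    have hlin := (innerSL ℝ (gradient g u)).hasFDerivAt.sub_const ⟪gradient g u, u⟫_ℝ (x := w)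
    simp only [innerSL_apply_apply, ← inner_sub_right] at hlin
    exact hlin.add ((hasFDerivAt_breg hd u w).const_smul c)
  have hzero := IsLocalMin.hasFDerivAt_eq_zero (Eventually.of_forall h.1) hmodel
  refine ext_inner_right ℝ fun v => ?_
  have hv := congrArg (fun T : E →L[ℝ] ℝ => T v) hzero
  simp only [add_apply, smul_apply, sub_apply, innerSL_apply_apply, zero_apply,
    ← InnerProductSpace.toDual_symm_apply (y := fderiv ℝ d w), smul_eq_mul] at hv
  change ⟪gradient g u, v⟫_ℝ + c * (⟪gradient d w, v⟫_ℝ - ⟪gradient d u, v⟫_ℝ) = 0 at hv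
  rw [real_inner_smul_left, inner_sub_left]
  linarith

theorem inner_gradient_sub_eq (h : stepOK g d c u w) (hd : Differentiable ℝ d) :
    ⟪gradient g u, w - u⟫_ℝ = -(c * (breg d u w + breg d w u)) := by
  rw [h.gradient_eq hd, real_inner_smul_left, breg_add_breg, ← neg_sub u w, inner_neg_right,
    mul_neg]

theorem add_mul_breg_le (h : stepOK g d c u w) (hd : Differentiable ℝ d) :
    g w + c * breg d w u ≤ g u := by
  linarith [h.2, h.inner_gradient_sub_eq hd]

theorem sub_le_mul_breg_sub (h : stepOK g d c u w) (hd : Differentiable ℝ d) {x : E}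
    (hconv : g u + ⟪gradient g u, x - u⟫_ℝ ≤ g x) :
    g w - g x ≤ c * (breg d u x - breg d w x) := by
  have hsplit : ⟪gradient g u, w - u⟫_ℝ = ⟪gradient g u, x - u⟫_ℝ - ⟪gradient g u, x - w⟫_ℝ := by
    rw [← inner_sub_right, sub_sub_sub_cancel_left]
  have hthree : ⟪gradient g u, x - w⟫_ℝ = c * (breg d u w + breg d w x - breg d u x) := by
    rw [h.gradient_eq hd, real_inner_smul_left, breg_three_point d u w x, ← neg_sub (gradient d w),
      inner_neg_left]
    ring
  linarith [h.2]

theorem norm_gradient_le (h : stepOK g d c u w) (hd : Differentiable ℝ d) (hc : 0 ≤ c) {N : ℝ}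
    (hlip : ‖gradient d u - gradient d w‖ ≤ N * ‖u - w‖) :
    ‖gradient g u‖ ≤ c * N * ‖w - u‖ := by
  rw [h.gradient_eq hd, norm_smul, Real.norm_of_nonneg hc, mul_assoc, norm_sub_rev w]
  exact mul_le_mul_of_nonneg_left hlip hc

theorem norm_gradient_rpow_le (h : stepOK g d c u w) (hd : Differentiable ℝ d)
    {q σq M N B : ℝ} (hq : 1 ≤ q) (hσq : 0 < σq)
    (hH2 : ∀ x y : E, σq / q * ‖x - y‖ ^ q ≤ breg d y x) (hc : 0 ≤ c) (hcM : c ≤ M) (hN : 0 ≤ N)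
    (hlip : ‖gradient d u - gradient d w‖ ≤ N * ‖u - w‖) (hB : c * breg d w u ≤ B) :
    ‖gradient g u‖ ^ q ≤ N ^ q * (M ^ (q - 1) * (q / σq * B)) := by
  have hΔ : ‖w - u‖ ^ q ≤ q / σq * breg d w u :=
    norm_sub_rev w u ▸ norm_sub_rpow_le_mul_breg (by linarith) hσq hH2 u w
  calc ‖gradient g u‖ ^ q ≤ (c * N * ‖w - u‖) ^ q := by
        gcongr
        exact h.norm_gradient_le hd hc hlip
    _ = N ^ q * (c * ‖w - u‖) ^ q := by
        rw [mul_right_comm, Real.mul_rpow (by positivity) hN, mul_comm]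
    _ ≤ N ^ q * (M ^ (q - 1) * (q / σq * B)) := by
        gcongr
        exact mul_rpow_le_of_rpow_le hq hc hcM (norm_nonneg _) hΔ
          (by rw [mul_left_comm]; gcongr)

end stepOK

section Existence

variable {E : Type*} [NormedAddCommGroup E] [InnerProductSpace ℝ E] [FiniteDimensional ℝ E]
  {d : E → ℝ} {q σq c : ℝ}

theorem exists_forall_inner_add_mul_breg_le (hd : Continuous d) (hq : 1 < q) (hσq : 0 < σq)
    (hH2 : ∀ x y : E, σq / q * ‖x - y‖ ^ q ≤ breg d y x) (hc : 0 < c) (a u : E) :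
    ∃ w, ∀ z, ⟪a, w - u⟫_ℝ + c * breg d u w ≤ ⟪a, z - u⟫_ℝ + c * breg d u z := by
  have hcont : Continuous fun z => ⟪a, z - u⟫_ℝ + c * breg d u z := by
    unfold breg; fun_prop
  have hlower : ∀ z, c * (σq / q) * ‖z - u‖ ^ q - ‖a‖ * ‖z - u‖
      ≤ ⟪a, z - u⟫_ℝ + c * breg d u z := fun z => by
    have := mul_le_mul_of_nonneg_left (hH2 z u) hc.le
    linarith [neg_le_of_abs_le (abs_real_inner_le_norm a (z - u))]
  have hnorm : Tendsto (fun z : E => ‖z - u‖) (cocompact E) atTop := by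
    simpa only [dist_eq_norm] using tendsto_dist_right_cocompact_atTop u
  exact hcont.exists_forall_le <| tendsto_atTop_mono hlower <|
    (tendsto_mul_rpow_sub_mul_atTop (by positivity) hq ‖a‖).comp hnorm

theorem exists_stepOK {g : E → ℝ} {L : ℝ} (hd : Continuous d) (hq : 1 < q) (hσq : 0 < σq)
    (hH2 : ∀ x y : E, σq / q * ‖x - y‖ ^ q ≤ breg d y x)
    (hH1 : ∀ x y : E, g x ≤ g y + ⟪gradient g y, x - y⟫_ℝ + L * breg d y x)
    (hL : 0 < L) (hLc : L ≤ c) (u : E) : ∃ w, stepOK g d c u w := by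
  obtain ⟨w, hw⟩ :=
    exists_forall_inner_add_mul_breg_le hd hq hσq hH2 (hL.trans_le hLc) (gradient g u) u
  refine ⟨w, hw, (hH1 w u).trans ?_⟩
  have := breg_nonneg_of_uniformlyConvex (by linarith) hσq.le hH2 u w
  gcongr

end Existence

namespace algA

variable {E : Type*} [NormedAddCommGroup E] [InnerProductSpace ℝ E] [CompleteSpace E]
  {g d : E → ℝ} {L0 L : ℝ} {y : ℕ → E} {Lk : ℕ → ℝ} {ik : ℕ → ℕ}

theorem coeff_le (halg : algA g d L0 y Lk ik)
    (hexists : ∀ c, L ≤ c → ∀ u, ∃ w, stepOK g d c u w) {B : ℝ} (hLB : 2 * L ≤ B) {k : ℕ}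
    (hk : Lk k ≤ B) : 2 ^ ik k * Lk k ≤ B := by
  have hmin := (halg.2 k).2.1
  cases hik : ik k with
  | zero => simpa using hk
  | succ j =>
    have hlt : 2 ^ j * Lk k < L := not_le.1 fun hLj =>
      hmin j (by omega) (hexists _ hLj (y k))
    rw [pow_succ]
    linarith

theorem coeff_pos_and_le (halg : algA g d L0 y Lk ik) (hL0 : 0 < L0)
    (hexists : ∀ c, L ≤ c → ∀ u, ∃ w, stepOK g d c u w) (k : ℕ) :
    0 < 2 ^ ik k * Lk k ∧ 2 ^ ik k * Lk k ≤ max (2 * L0) (4 * L) / 2 := by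
  set B := max (2 * L0) (4 * L) / 2
  have hL0B : L0 ≤ B := by rw [le_div_iff₀ two_pos]; linarith [le_max_left (2 * L0) (4 * L)]
  have hLB : 2 * L ≤ B := by rw [le_div_iff₀ two_pos]; linarith [le_max_right (2 * L0) (4 * L)]
  have hLk : ∀ k, 0 < Lk k ∧ Lk k ≤ B := by
    intro k
    induction k with
    | zero => exact halg.1.symm ▸ ⟨hL0, hL0B⟩
    | succ k ih =>
      have hc := halg.coeff_le hexists hLB ih.2
      rw [(halg.2 k).2.2]
      constructor
      · have := ih.1
        positivity
      · linarith [hL0.trans_le hL0B]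
  exact ⟨by have := (hLk k).1; positivity, halg.coeff_le hexists hLB (hLk k).2⟩

theorem antitone_objective (halg : algA g d L0 y Lk ik) (hd : Differentiable ℝ d)
    (hbreg : ∀ u v, 0 ≤ breg d u v) (hc : ∀ k, 0 < 2 ^ ik k * Lk k) :
    Antitone fun k => g (y k) :=
  antitone_nat_of_succ_le fun k => by
    linarith [(halg.2 k).1.add_mul_breg_le hd, mul_nonneg (hc k).le (hbreg (y (k + 1)) (y k))]

theorem exists_mem_Ico_mul_breg_le (halg : algA g d L0 y Lk ik) (hd : Differentiable ℝ d)
    (hbreg : ∀ u v, 0 ≤ breg d u v) (hH4 : ∀ x y : E, g y + ⟪gradient g y, x - y⟫_ℝ ≤ g x)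
    {ystar : E} (hmin : ∀ z : E, g ystar ≤ g z) {C : ℝ}
    (hc : ∀ k, 0 < 2 ^ ik k * Lk k ∧ 2 ^ ik k * Lk k ≤ C) {s : ℕ} (hs : 0 < s) :
    ∃ k ∈ Finset.Ico (2 * s) (3 * s), 2 ^ ik k * Lk k * breg d (y (k + 1)) (y k)
      ≤ C * breg d (y 0) ystar / (2 * s ^ 2) :=
  exists_mem_Ico_le_of_rate ((hc 0).1.le.trans (hc 0).2) (fun k => sub_nonneg.2 (hmin _))
    (fun k => hbreg (y k) ystar) (fun k => mul_nonneg (hc k).1.le (hbreg _ _)) hc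
    (fun k => by linarith [(halg.2 k).1.add_mul_breg_le hd])
    (fun k => (halg.2 k).1.sub_le_mul_breg_sub hd (hH4 ystar (y k))) hs

end algA

theorem statement_15_general
    {E : Type*} [NormedAddCommGroup E] [InnerProductSpace ℝ E] [FiniteDimensional ℝ E]
    (d : E → ℝ)
    (g : E → ℝ)
    (L : ℝ) (hL : 0 < L)
    (hH1 : ∀ x y : E, g x ≤ g y + ⟪gradient g y, x - y⟫_ℝ + L * breg d y x)
    (q σq : ℝ) (hq : 2 ≤ q) (hσq : 0 < σq)
    (hd2 : ContDiff ℝ 2 d)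
    (hH2 : ∀ x y : E, σq / q * ‖x - y‖ ^ q ≤ breg d y x)
    (hH4 : ∀ x y : E, g y + ⟪gradient g y, x - y⟫_ℝ ≤ g x)
    (L0 : ℝ) (hL0 : 0 < L0)
    (y : ℕ → E) (Lk : ℕ → ℝ) (ik : ℕ → ℕ)
    (halg : algA g d L0 y Lk ik)
    (N : ℝ)
    (hH3 : ∀ z ∈ convexHull ℝ {w : E | g w ≤ g (y 0)}, ‖iteratedFDeriv ℝ 2 d z‖ ≤ N)
    (ystar : E) (hmin : ∀ z : E, g ystar ≤ g z)
    (T s : ℕ) (hs : 1 ≤ s) (hT : T = 3 * s) :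
    ∃ k < T, ‖gradient g (y k)‖ ≤
      max (2 * L0) (4 * L) * N * (q * breg d (y 0) ystar / σq) ^ (1 / q)
        * (3 / (T : ℝ)) ^ (2 / q) := by
  set M := max (2 * L0) (4 * L)
  have hq1 : 1 < q := by linarith
  have hdiff : Differentiable ℝ d := hd2.differentiable (by norm_num)
  have hbreg := breg_nonneg_of_uniformlyConvex (by linarith) hσq.le hH2
  have hc := halg.coeff_pos_and_le hL0
    fun _ hLc => exists_stepOK hdiff.continuous hq1 hσq hH2 hH1 hL hLc
  have hsub j : y j ∈ convexHull ℝ {w | g w ≤ g (y 0)} :=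
    subset_convexHull ℝ _ <| halg.antitone_objective hdiff hbreg (fun k => (hc k).1) (Nat.zero_le j)
  have hN : 0 ≤ N := (norm_nonneg _).trans (hH3 _ (hsub 0))
  have hM : 0 < M := lt_max_of_lt_left (by linarith)
  obtain ⟨k, hkI, hkB⟩ := halg.exists_mem_Ico_mul_breg_le hdiff hbreg hH4 hmin hc hs
  have hgrad := (halg.2 k).1.norm_gradient_rpow_le hdiff hq1.le hσq hH2 (hc k).1.le
    ((hc k).2.trans (half_le_self hM.le)) hN (norm_gradient_sub_le_of_norm_iteratedFDeriv_le hd2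
      (convex_convexHull ℝ _) hH3 (hsub k) (hsub (k + 1))) hkB
  have hS0 := hbreg (y 0) ystar
  refine ⟨k, hT ▸ (Finset.mem_Ico.1 hkI).2, le_mul_rpow_mul_rpow_of_rpow_le (by linarith)
    (norm_nonneg _) (by positivity) (by positivity) (by positivity) (hgrad.trans ?_)⟩
  have hs' : (0 : ℝ) < s := by exact_mod_cast hs
  calc N ^ q * (M ^ (q - 1) * (q / σq * (M / 2 * breg d (y 0) ystar / (2 * s ^ 2))))
      = (M * N) ^ q * (q * breg d (y 0) ystar / σq) * (3 / T) ^ 2 / 4 := by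
        rw [Real.mul_rpow hM.le hN, Real.rpow_sub_one hM.ne', hT]
        push_cast
        field_simp
        ring
    _ ≤ (M * N) ^ q * (q * breg d (y 0) ystar / σq) * (3 / T) ^ 2 :=
        div_le_self (by positivity) (by norm_num)

/-- Corollary A.5. Under (H1)–(H3) and (H4) with `μ = 0` (convexity of `g`),
if `T = 3s` with `s ≥ 1`, Algorithm A satisfies
`min_{0≤k≤T−1} ‖∇g(y_k)‖ ≤ M·N·[q·β_d(y₀, y*)/σ_q]^{1/q}·(3/T)^{2/q}`, `M = max{2L₀, 4L}`. -/
theorem statement_15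
    {E : Type*} [NormedAddCommGroup E] [InnerProductSpace ℝ E] [FiniteDimensional ℝ E]
    (d : E → ℝ) (hd : ConvexOn ℝ Set.univ d)
    (g : E → ℝ) (hg : Differentiable ℝ g)
    (L : ℝ) (hL : 0 < L)
    (hH1 : ∀ x y : E, g x ≤ g y + ⟪gradient g y, x - y⟫_ℝ + L * breg d y x)
    (q σq : ℝ) (hq : 2 ≤ q) (hσq : 0 < σq)
    (hd2 : ContDiff ℝ 2 d)
    (hH2 : ∀ x y : E, σq / q * ‖x - y‖ ^ q ≤ breg d y x)
    (hH4 : ∀ x y : E, g y + ⟪gradient g y, x - y⟫_ℝ ≤ g x)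
    (L0 : ℝ) (hL0 : 0 < L0)
    (y : ℕ → E) (Lk : ℕ → ℝ) (ik : ℕ → ℕ)
    (halg : algA g d L0 y Lk ik)
    (N : ℝ)
    (hH3 : ∀ z ∈ convexHull ℝ {w : E | g w ≤ g (y 0)}, ‖iteratedFDeriv ℝ 2 d z‖ ≤ N)
    (ystar : E) (hmin : ∀ z : E, g ystar ≤ g z)
    (T s : ℕ) (hs : 1 ≤ s) (hT : T = 3 * s) :
    ∃ k < T, ‖gradient g (y k)‖ ≤
      max (2 * L0) (4 * L) * N * (q * breg d (y 0) ystar / σq) ^ (1 / q)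
        * (3 / (T : ℝ)) ^ (2 / q) :=
  statement_15_general d g L hL hH1 q σq hq hσq hd2 hH2 hH4 L0 hL0 y Lk ik halg N hH3 ystar hmin T s
    hs hT
end

section
/- Suppose (H1) holds and let {y_k} be generated by Algorithm B. Then for all k ≥ 0, g̃(y_k) − g̃(y_{k+1}) ≥ L·β_d(y_k, y_{k+1}), where g̃ = g + φ. -/
open scoped InnerProductSpace

/-
Comparing the proximal step with the trivial candidate `z = y_k`, where the Bregman term
vanishes, gives `⟨∇g(y_k), y_{k+1} − y_k⟩ + 2L·β_d(y_k, y_{k+1}) + φ(y_{k+1}) ≤ φ(y_k)`.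
Relative smoothness bounds `g(y_{k+1})` by the same linearisation with only `L·β_d`, and the
surplus `L·β_d(y_k, y_{k+1})` is the claimed decrease.
-/

lemma breg_self {E : Type*} [NormedAddCommGroup E] [InnerProductSpace ℝ E] [CompleteSpace E]
    (d : E → ℝ) (u : E) : breg d u u = 0 := by
  simp [breg]

lemma EReal.coe_add_add_coe_le {a b c e : ℝ} {p q : EReal} (h : a + e ≤ b + c)
    (hpq : (c : EReal) + p ≤ q) : (a : EReal) + p + e ≤ b + q :=
  calc (a : EReal) + p + e = ((a + e : ℝ) : EReal) + p := by
        rw [EReal.coe_add, add_right_comm]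
    _ ≤ ((b + c : ℝ) : EReal) + p := by gcongr
    _ = b + (c + p) := by rw [EReal.coe_add, add_assoc]
    _ ≤ b + q := by gcongr

theorem breg_prox_grad_step_descent {E : Type*} [NormedAddCommGroup E] [InnerProductSpace ℝ E]
    [CompleteSpace E] {d g : E → ℝ} {φ : E → EReal} {L : ℝ} {x x' : E}
    (hsmooth : g x' ≤ g x + ⟪gradient g x, x' - x⟫_ℝ + L * breg d x x')
    (hmin : ∀ z : E,
      ((⟪gradient g x, x' - x⟫_ℝ + 2 * L * breg d x x' : ℝ) : EReal) + φ x'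
        ≤ ((⟪gradient g x, z - x⟫_ℝ + 2 * L * breg d x z : ℝ) : EReal) + φ z) :
    ((g x' : ℝ) : EReal) + φ x' + ((L * breg d x x' : ℝ) : EReal) ≤ ((g x : ℝ) : EReal) + φ x := by
  have hstay := hmin x
  rw [breg_self, sub_self, inner_zero_right, mul_zero, add_zero, EReal.coe_zero, zero_add]
    at hstay
  exact EReal.coe_add_add_coe_le (by linarith) hstay

theorem statement_17_general
    {E : Type*} [NormedAddCommGroup E] [InnerProductSpace ℝ E] [FiniteDimensional ℝ E]
    (d : E → ℝ)
    (g : E → ℝ)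
    (L : ℝ)
    (hH1 : ∀ x y : E, g x ≤ g y + ⟪gradient g y, x - y⟫_ℝ + L * breg d y x)
    (φ : E → EReal)
    (y : ℕ → E)
    (halg : ∀ k : ℕ, φ (y (k + 1)) ≠ ⊤ ∧ ∀ z : E,
      ((⟪gradient g (y k), y (k + 1) - y k⟫_ℝ
          + 2 * L * breg d (y k) (y (k + 1)) : ℝ) : EReal) + φ (y (k + 1))
        ≤ ((⟪gradient g (y k), z - y k⟫_ℝ + 2 * L * breg d (y k) z : ℝ) : EReal) + φ z) :
    ∀ k : ℕ,
      ((g (y (k + 1)) : ℝ) : EReal) + φ (y (k + 1))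
          + ((L * breg d (y k) (y (k + 1)) : ℝ) : EReal)
        ≤ ((g (y k) : ℝ) : EReal) + φ (y k) :=
  fun k => breg_prox_grad_step_descent (hH1 _ _) (halg k).2

/-- Lemma A.7. Under (H1), Algorithm B (Bregman proximal gradient on the
composite objective `g̃ = g + φ`) satisfies `g̃(y_k) − g̃(y_{k+1}) ≥ L·β_d(y_k, y_{k+1})`,
i.e. `g̃(y_{k+1}) + L·β_d(y_k, y_{k+1}) ≤ g̃(y_k)`, for all `k ≥ 0`. -/
theorem statement_17
    {E : Type*} [NormedAddCommGroup E] [InnerProductSpace ℝ E] [FiniteDimensional ℝ E]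
    (d : E → ℝ) (hd : ConvexOn ℝ Set.univ d) (hd' : Differentiable ℝ d)
    (g : E → ℝ) (hg : Differentiable ℝ g)
    (L : ℝ) (hL : 0 < L)
    (hH1 : ∀ x y : E, g x ≤ g y + ⟪gradient g y, x - y⟫_ℝ + L * breg d y x)
    (φ : E → EReal)
    (hφbot : ∀ z : E, φ z ≠ ⊥) (hφtop : ∃ z : E, φ z ≠ ⊤)
    (hφclosed : LowerSemicontinuous φ)
    (hφconv : ∀ u v : E, ∀ a b : ℝ, 0 < a → 0 < b → a + b = 1 →
      φ (a • u + b • v) ≤ (a : EReal) * φ u + (b : EReal) * φ v)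
    (y : ℕ → E) (hy0 : φ (y 0) ≠ ⊤)
    (halg : ∀ k : ℕ, φ (y (k + 1)) ≠ ⊤ ∧ ∀ z : E,
      ((⟪gradient g (y k), y (k + 1) - y k⟫_ℝ
          + 2 * L * breg d (y k) (y (k + 1)) : ℝ) : EReal) + φ (y (k + 1))
        ≤ ((⟪gradient g (y k), z - y k⟫_ℝ + 2 * L * breg d (y k) z : ℝ) : EReal) + φ z) :
    ∀ k : ℕ,
      ((g (y (k + 1)) : ℝ) : EReal) + φ (y (k + 1))
          + ((L * breg d (y k) (y (k + 1)) : ℝ) : EReal)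
        ≤ ((g (y k) : ℝ) : EReal) + φ (y k) :=
  statement_17_general d g L hH1 φ y halg
end
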